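/- arXiv:2506.17292 — 4 statements merged into one kernel-verified Lean document; each statement's English description precedes it below -/
import Mathlib

section
/- (Membership-inference success bound for the FC-based adversary.) Let 𝒳 be a finite subset of ℝ^m with |𝒳| ≥ 2 and Δ := (1/2)·min{‖X − Y‖₁ : X, Y ∈ 𝒳, X ≠ Y}. Let D ⊆ 𝒳 with |D| = n ≥ 1, and for each X ∈ D let Z_X be an 𝒳-valued random variable (the LDP-protected version of X), the family (Z_X)_{X∈D} being mutually independent with Pr[Z_X ≠ X] ≤ P for every X ∈ D. Let b be a uniform bit; if b = 1 let T be uniformly distributed on D, and if b = 0 let T be a random element of 𝒳 \ D satisfying Pr[T = t] ≤ 1/(|𝒳| − 1) for every t; in both cases (b, T) is independent of (Z_X)_{X∈D}. Define the guess b' = 1 if there exists X ∈ D with Z_X ∈ B₁(T, Δ), and b' = 0 otherwise. Then Pr[b' = 1 | b = 1] + Pr[b' = 0 | b = 0] − 1 ≥ 1 − ((n + |𝒳| − 1)/(|𝒳| − 1))·P. -/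
open MeasureTheory ProbabilityTheory

/-- Membership-inference success bound for the FC-based adversary: the advantage
Pr[b'=1 | b=1] + Pr[b'=0 | b=0] − 1 of the guess "b' = 1 iff some protected data point
Z_X lands in the Δ-ball around the target T" is at least
1 − ((n + |𝒳| − 1)/(|𝒳| − 1))·P. -/
theorem stmt_3 {m : ℕ} {Ω : Type*} [MeasurableSpace Ω]
    (μ : Measure Ω) [IsProbabilityMeasure μ]
    (𝒳 : Finset (Fin m → ℝ)) (h𝒳 : 2 ≤ 𝒳.card) (Δ : ℝ)
    (hΔ : Δ = (1 / 2) * sInf {r : ℝ | ∃ X ∈ 𝒳, ∃ Y ∈ 𝒳, X ≠ Y ∧ r = ∑ i, |X i - Y i|})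
    (D : Finset (Fin m → ℝ)) (hD : D ⊆ 𝒳) (n : ℕ) (hn : D.card = n) (hn1 : 1 ≤ n)
    (P : ℝ)
    -- the family of LDP-protected versions of the data points of D
    (Z : {X // X ∈ D} → Ω → (Fin m → ℝ))
    (hZmeas : ∀ X, Measurable (Z X))
    (hZval : ∀ X ω, Z X ω ∈ 𝒳)
    (hZP : ∀ X, (μ {ω | Z X ω ≠ (X : Fin m → ℝ)}).toReal ≤ P)
    (hZindep : iIndepFun
      (fun X => Z X) μ)
    -- the random bit and the target
    (b : Ω → Bool) (hbmeas : Measurable b)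
    (T : Ω → (Fin m → ℝ)) (hTmeas : Measurable T)
    (hbunif : μ {ω | b ω = true} = 1 / 2)
    (hT1 : ∀ t ∈ D,
      ProbabilityTheory.cond μ {ω | b ω = true} {ω | T ω = t} = 1 / (n : ENNReal))
    (hT0supp :
      ProbabilityTheory.cond μ {ω | b ω = false} {ω | T ω ∈ (𝒳 \ D : Finset (Fin m → ℝ))} = 1)
    (hT0 : ∀ t : Fin m → ℝ,
      ProbabilityTheory.cond μ {ω | b ω = false} {ω | T ω = t}
        ≤ 1 / ((𝒳.card : ENNReal) - 1))
    -- (b, T) is independent of the family (Z_X)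
    (hindep : IndepFun (fun ω => (b ω, T ω)) (fun ω (X : {X // X ∈ D}) => Z X ω) μ) :
    (ProbabilityTheory.cond μ {ω | b ω = true}
        {ω | ∃ X : {X // X ∈ D}, ∑ i, |Z X ω i - T ω i| < Δ}).toReal
      + (ProbabilityTheory.cond μ {ω | b ω = false}
        {ω | ¬ ∃ X : {X // X ∈ D}, ∑ i, |Z X ω i - T ω i| < Δ}).toReal - 1
      ≥ 1 - (((n : ℝ) + 𝒳.card - 1) / ((𝒳.card : ℝ) - 1)) * P := by
  classical
  -- notation
  set S : Set ℝ := {r : ℝ | ∃ X ∈ 𝒳, ∃ Y ∈ 𝒳, X ≠ Y ∧ r = ∑ i, |X i - Y i|} with hS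
  set A : Set Ω := {ω | ∃ X : {X // X ∈ D}, ∑ i, |Z X ω i - T ω i| < Δ} with hA
  set Bt : Set Ω := {ω | b ω = true} with hBt
  set Bf : Set Ω := {ω | b ω = false} with hBf
  -- P is nonnegative
  have hDne : D.Nonempty := Finset.card_pos.mp (by omega)
  have hP0 : 0 ≤ P := le_trans ENNReal.toReal_nonneg (hZP ⟨hDne.choose, hDne.choose_spec⟩)
  -- geometry of Δ
  have hSfin : S.Finite := by
    have : S ⊆ (fun p : (Fin m → ℝ) × (Fin m → ℝ) => ∑ i, |p.1 i - p.2 i|) ''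
        ((𝒳 ×ˢ 𝒳 : Finset _) : Set _) := by
      rintro r ⟨X, hX, Y, hY, hXY, rfl⟩
      exact ⟨(X, Y), by simp [Finset.mem_product, hX, hY], rfl⟩
    exact (((𝒳 ×ˢ 𝒳).finite_toSet).image _).subset this
  have hSne : S.Nonempty := by
    obtain ⟨X, hX, Y, hY, hXY⟩ := Finset.one_lt_card.mp (by omega : 1 < 𝒳.card)
    exact ⟨_, X, hX, Y, hY, hXY, rfl⟩
  have hpos : ∀ r ∈ S, 0 < r := by
    rintro r ⟨X, hX, Y, hY, hXY, rfl⟩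
    obtain ⟨i, hi⟩ := Function.ne_iff.mp hXY
    exact Finset.sum_pos' (fun i _ => abs_nonneg _)
      ⟨i, Finset.mem_univ i, abs_pos.mpr (sub_ne_zero.mpr hi)⟩
  have hInf := hpos _ (hSne.csInf_mem hSfin)
  have hΔpos : 0 < Δ := by rw [hΔ]; linarith
  have hsep : ∀ X ∈ 𝒳, ∀ Y ∈ 𝒳, (∑ i, |X i - Y i| < Δ) → X = Y := by
    intro X hX Y hY hlt
    by_contra hne
    have hmem : (∑ i, |X i - Y i|) ∈ S := ⟨X, hX, Y, hY, hne, rfl⟩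
    have h2 := csInf_le hSfin.bddBelow hmem
    rw [hΔ] at hlt
    linarith
  -- measurability
  have hBtm : MeasurableSet Bt := hbmeas (measurableSet_singleton true)
  have hBfm : MeasurableSet Bf := hbmeas (measurableSet_singleton false)
  have hTm : ∀ t : Fin m → ℝ, MeasurableSet {ω | T ω = t} :=
    fun t => hTmeas (measurableSet_singleton t)
  have hAm : MeasurableSet A := by
    have : A = ⋃ X : {X // X ∈ D}, {ω | ∑ i, |Z X ω i - T ω i| < Δ} := by
      ext ω; simp [hA, Set.mem_iUnion]
    rw [this]
    refine MeasurableSet.iUnion fun X => measurableSet_lt ?_ measurable_const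
    exact Finset.measurable_sum _ fun i _ =>
      (((measurable_pi_apply i).comp (hZmeas X)).sub
        ((measurable_pi_apply i).comp hTmeas)).abs
  -- the two halves of b
  have hμBf : μ Bf = 1 / 2 := by
    have hco : Bf = Btᶜ := by ext ω; cases h : b ω <;> simp [hBt, hBf, h]
    rw [hco, measure_compl hBtm (measure_ne_top μ _), measure_univ, hbunif]
    have := ENNReal.sub_half (a := 1) ENNReal.one_ne_top
    simpa using this
  haveI hPM1 : IsProbabilityMeasure (μ[|Bt]) :=
    cond_isProbabilityMeasure (by rw [hbunif]; norm_num)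
  haveI hPM0 : IsProbabilityMeasure (μ[|Bf]) :=
    cond_isProbabilityMeasure (by rw [hμBf]; norm_num)
  -- independence: product formula
  have hkey : ∀ (bb : Bool) (t : Fin m → ℝ) (X : {X // X ∈ D}) (E : Set (Fin m → ℝ)),
      MeasurableSet E →
      μ ({ω | b ω = bb} ∩ {ω | T ω = t} ∩ {ω | Z X ω ∈ E})
        = μ ({ω | b ω = bb} ∩ {ω | T ω = t}) * μ {ω | Z X ω ∈ E} := by
    intro bb t X E hE
    have h1 : MeasurableSet ({bb} ×ˢ {t} : Set (Bool × (Fin m → ℝ))) :=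
      (measurableSet_singleton bb).prod (measurableSet_singleton t)
    have h2 : MeasurableSet ((fun h : {X // X ∈ D} → (Fin m → ℝ) => h X) ⁻¹' E) :=
      (measurable_pi_apply X) hE
    have := hindep.measure_inter_preimage_eq_mul _ _ h1 h2
    have hfpre : (fun ω => (b ω, T ω)) ⁻¹' ({bb} ×ˢ {t}) = {ω | b ω = bb} ∩ {ω | T ω = t} := by
      ext ω; simp [Set.mem_prod]
    have hgpre : (fun ω (X' : {X // X ∈ D}) => Z X' ω) ⁻¹'
        ((fun h : {X // X ∈ D} → (Fin m → ℝ) => h X) ⁻¹' E) = {ω | Z X ω ∈ E} := rfl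
    rwa [hfpre, hgpre] at this
  have hcond : ∀ (bb : Bool), MeasurableSet {ω | b ω = bb} →
      ∀ (t : Fin m → ℝ) (X : {X // X ∈ D}) (E : Set (Fin m → ℝ)), MeasurableSet E →
      (μ[|{ω | b ω = bb}]) ({ω | T ω = t} ∩ {ω | Z X ω ∈ E})
        = (μ[|{ω | b ω = bb}]) {ω | T ω = t} * μ {ω | Z X ω ∈ E} := by
    intro bb hBm t X E hE
    rw [cond_apply hBm, cond_apply hBm, ← Set.inter_assoc, hkey bb t X E hE, mul_assoc]
  -- arithmetic facts about n and |𝒳|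
  have hn0 : (n : ENNReal) ≠ 0 := by exact_mod_cast (by omega : n ≠ 0)
  have hntop : (n : ENNReal) ≠ ⊤ := ENNReal.natCast_ne_top n
  have hPof : ∀ X, μ {ω | Z X ω ≠ (X : Fin m → ℝ)} ≤ ENNReal.ofReal P := fun X =>
    (ENNReal.le_ofReal_iff_toReal_le (measure_ne_top μ _) hP0).mpr (hZP X)
  -- support of T when b = 1
  have hTDm : MeasurableSet {ω | T ω ∈ (D : Set (Fin m → ℝ))} :=
    hTmeas D.finite_toSet.measurableSet
  have hTD1 : (μ[|Bt]) {ω | T ω ∈ (D : Set (Fin m → ℝ))} = 1 := by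
    have hun : {ω | T ω ∈ (D : Set (Fin m → ℝ))} = ⋃ t ∈ D, {ω | T ω = t} := by
      ext ω; simp
    rw [hun, measure_biUnion_finset
      (fun t _ s _ hts => Set.disjoint_left.mpr fun ω h1 h2 => hts (h1.symm.trans h2))
      (fun t _ => hTm t)]
    rw [Finset.sum_congr rfl (fun t ht => hT1 t ht), Finset.sum_const, hn, nsmul_eq_mul, one_div,
      ENNReal.mul_inv_cancel hn0 hntop]
  have hTD1c : (μ[|Bt]) {ω | T ω ∈ (D : Set (Fin m → ℝ))}ᶜ = 0 :=
    (prob_compl_eq_zero_iff hTDm).mpr hTD1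
  -- bound on Pr[b' = 0 | b = 1]
  have h1bound : (μ[|Bt]) Aᶜ ≤ ENNReal.ofReal P := by
    have hsub : Aᶜ ∩ {ω | T ω ∈ (D : Set (Fin m → ℝ))} ⊆
        ⋃ X ∈ (Finset.univ : Finset {X // X ∈ D}),
          ({ω | T ω = (X : Fin m → ℝ)} ∩
            {ω | Z X ω ∈ ({(X : Fin m → ℝ)}ᶜ : Set (Fin m → ℝ))}) := by
      rintro ω ⟨hω1, hω2⟩
      refine Set.mem_biUnion (Finset.mem_univ (⟨T ω, hω2⟩ : {X // X ∈ D})) ⟨rfl, ?_⟩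
      intro hZeq
      exact hω1 ⟨⟨T ω, hω2⟩, by simp [Set.mem_singleton_iff.mp hZeq, hΔpos]⟩
    have h0 : (μ[|Bt]) (Aᶜ \ {ω | T ω ∈ (D : Set (Fin m → ℝ))}) = 0 :=
      measure_mono_null (Set.diff_subset_compl _ _) hTD1c
    have hle := measure_le_inter_add_diff (μ[|Bt]) Aᶜ {ω | T ω ∈ (D : Set (Fin m → ℝ))}
    rw [h0, add_zero] at hle
    refine hle.trans ((measure_mono hsub).trans ?_)
    refine (measure_biUnion_finset_le _ _).trans ?_
    have hterm : ∀ X : {X // X ∈ D},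
        (μ[|Bt]) ({ω | T ω = (X : Fin m → ℝ)} ∩
            {ω | Z X ω ∈ ({(X : Fin m → ℝ)}ᶜ : Set (Fin m → ℝ))})
          ≤ (n : ENNReal)⁻¹ * ENNReal.ofReal P := by
      intro X
      rw [hcond true hBtm _ X _ (measurableSet_singleton _).compl, hT1 _ X.2, one_div]
      exact mul_le_mul_right (hPof X) _
    refine (Finset.sum_le_sum fun X _ => hterm X).trans ?_
    rw [Finset.sum_const, Finset.card_univ, Fintype.card_coe, hn, nsmul_eq_mul, ← mul_assoc,
      ENNReal.mul_inv_cancel hn0 hntop, one_mul]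
  -- support of T when b = 0
  have hXDm : MeasurableSet {ω | T ω ∈ (𝒳 \ D : Finset (Fin m → ℝ))} :=
    hTmeas (𝒳 \ D).finite_toSet.measurableSet
  have hT0c : (μ[|Bf]) {ω | T ω ∈ (𝒳 \ D : Finset (Fin m → ℝ))}ᶜ = 0 :=
    (prob_compl_eq_zero_iff hXDm).mpr hT0supp
  -- bound on Pr[b' = 1 | b = 0]
  have h0bound : (μ[|Bf]) A
      ≤ (n : ENNReal) * ((1 / ((𝒳.card : ENNReal) - 1)) * ENNReal.ofReal P) := by
    have hsub : A ∩ {ω | T ω ∈ (𝒳 \ D : Finset (Fin m → ℝ))} ⊆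
        ⋃ X ∈ (Finset.univ : Finset {X // X ∈ D}), ⋃ t ∈ 𝒳 \ D,
          ({ω | T ω = t} ∩ {ω | Z X ω ∈ ({t} : Set (Fin m → ℝ))}) := by
      rintro ω ⟨⟨X, hX⟩, hω2⟩
      refine Set.mem_biUnion (Finset.mem_univ X) (Set.mem_biUnion hω2 ⟨rfl, ?_⟩)
      exact hsep _ (hZval X ω) _ (Finset.mem_sdiff.mp hω2).1 hX
    have h0 : (μ[|Bf]) (A \ {ω | T ω ∈ (𝒳 \ D : Finset (Fin m → ℝ))}) = 0 :=
      measure_mono_null (Set.diff_subset_compl _ _) hT0c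
    have hle := measure_le_inter_add_diff (μ[|Bf]) A {ω | T ω ∈ (𝒳 \ D : Finset (Fin m → ℝ))}
    rw [h0, add_zero] at hle
    refine hle.trans ((measure_mono hsub).trans ?_)
    refine (measure_biUnion_finset_le _ _).trans ?_
    have hXbound : ∀ X : {X // X ∈ D},
        ∑ t ∈ 𝒳 \ D, (μ[|Bf]) ({ω | T ω = t} ∩ {ω | Z X ω ∈ ({t} : Set (Fin m → ℝ))})
          ≤ (1 / ((𝒳.card : ENNReal) - 1)) * ENNReal.ofReal P := by
      intro X
      have hstep : ∀ t ∈ 𝒳 \ D,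
          (μ[|Bf]) ({ω | T ω = t} ∩ {ω | Z X ω ∈ ({t} : Set (Fin m → ℝ))})
            ≤ (1 / ((𝒳.card : ENNReal) - 1)) * μ {ω | Z X ω ∈ ({t} : Set (Fin m → ℝ))} := by
        intro t ht
        rw [hcond false hBfm t X _ (measurableSet_singleton t)]
        exact mul_le_mul_left (hT0 t) _
      refine (Finset.sum_le_sum hstep).trans ?_
      rw [← Finset.mul_sum]
      refine mul_le_mul_right ?_ _
      have hdisj : ((𝒳 \ D : Finset (Fin m → ℝ)) : Set (Fin m → ℝ)).PairwiseDisjoint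
          (fun t => {ω | Z X ω ∈ ({t} : Set (Fin m → ℝ))}) := by
        intro t _ s _ hts
        refine Set.disjoint_left.mpr fun ω h1 h2 => hts ?_
        rw [← Set.mem_singleton_iff.mp h1, Set.mem_singleton_iff.mp h2]
      rw [← measure_biUnion_finset hdisj
        (fun t _ => (hZmeas X) (measurableSet_singleton t))]
      refine le_trans (measure_mono ?_) (hPof X)
      intro ω hω
      simp only [Set.mem_iUnion] at hω
      obtain ⟨t, ht, hω⟩ := hω
      have heq : Z X ω = t := Set.mem_singleton_iff.mp hω
      intro hc
      exact (Finset.mem_sdiff.mp ht).2 (by rw [← heq, hc]; exact X.2)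
    refine (Finset.sum_le_sum fun X _ => (measure_biUnion_finset_le _ _).trans (hXbound X)).trans ?_
    rw [Finset.sum_const, Finset.card_univ, Fintype.card_coe, hn, nsmul_eq_mul]
  -- translate to real numbers
  have hc1 : ((μ[|Bt]) Aᶜ).toReal ≤ P := ENNReal.toReal_le_of_le_ofReal hP0 h1bound
  have hN1 : 1 ≤ 𝒳.card := by omega
  have hNsub : ((𝒳.card : ENNReal) - 1) = ((𝒳.card - 1 : ℕ) : ENNReal) := by
    rw [ENNReal.natCast_sub]; simp
  have hRHSne : (n : ENNReal) * ((1 / ((𝒳.card : ENNReal) - 1)) * ENNReal.ofReal P) ≠ ⊤ := by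
    rw [hNsub]
    refine ENNReal.mul_ne_top hntop (ENNReal.mul_ne_top ?_ ENNReal.ofReal_ne_top)
    rw [one_div]
    exact ENNReal.inv_ne_top.mpr (by exact_mod_cast (by omega : 𝒳.card - 1 ≠ 0))
  have hRHS : ((n : ENNReal) * ((1 / ((𝒳.card : ENNReal) - 1)) * ENNReal.ofReal P)).toReal
      = (n : ℝ) * (1 / ((𝒳.card : ℝ) - 1) * P) := by
    rw [hNsub, ENNReal.toReal_mul, ENNReal.toReal_mul, ENNReal.toReal_ofReal hP0,
      ENNReal.toReal_div, ENNReal.toReal_one, ENNReal.toReal_natCast, ENNReal.toReal_natCast,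
      Nat.cast_sub hN1, Nat.cast_one]
  have hc0 : ((μ[|Bf]) A).toReal ≤ (n : ℝ) * (1 / ((𝒳.card : ℝ) - 1) * P) :=
    le_of_le_of_eq (ENNReal.toReal_mono hRHSne h0bound) hRHS
  have ha1 : ((μ[|Bt]) A).toReal = 1 - ((μ[|Bt]) Aᶜ).toReal := by
    have h := congrArg ENNReal.toReal (prob_add_prob_compl (μ := μ[|Bt]) hAm)
    rw [ENNReal.toReal_add (measure_ne_top _ _) (measure_ne_top _ _), ENNReal.toReal_one] at h
    linarith
  have ha0 : ((μ[|Bf]) Aᶜ).toReal = 1 - ((μ[|Bf]) A).toReal := by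
    have h := congrArg ENNReal.toReal (prob_add_prob_compl (μ := μ[|Bf]) hAm)
    rw [ENNReal.toReal_add (measure_ne_top _ _) (measure_ne_top _ _), ENNReal.toReal_one] at h
    linarith
  have hAc : {ω | ¬ ∃ X : {X // X ∈ D}, ∑ i, |Z X ω i - T ω i| < Δ} = Aᶜ := rfl
  rw [hAc, ha1, ha0]
  have hN2 : (2 : ℝ) ≤ (𝒳.card : ℝ) := by exact_mod_cast h𝒳
  have hkeyR : ((n : ℝ) + 𝒳.card - 1) / ((𝒳.card : ℝ) - 1) * P
      = P + (n : ℝ) * (1 / ((𝒳.card : ℝ) - 1) * P) := by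
    have hne : ((𝒳.card : ℝ) - 1) ≠ 0 := by linarith
    field_simp
    ring
  rw [hkeyR]
  linarith
end

section
/- (Exponentially small retrieval error of self-attention.) Let x_1, …, x_N ∈ ℝ^d with N ≥ 2, let M := max_j ‖x_j‖ > 0, and for a fixed index i let Δ_i := ⟨x_i, x_i⟩ − max_{j ≠ i} ⟨x_i, x_j⟩. Suppose α > 0 satisfies Δ_i ≥ 2/(αN) + (1/α)·log(2(N − 1)·N·α·M²). Then for every ξ ∈ ℝ^d with ‖ξ − x_i‖ ≤ 1/(αNM), it holds that ‖x_i − Σ_{j=1}^N softmax(α·(⟨x_1, ξ⟩, …, ⟨x_N, ξ⟩))_j · x_j‖ ≤ 2M(N − 1)·exp(2/N − α·Δ_i). -/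
open scoped RealInnerProductSpace

/-- Exponentially small retrieval error of self-attention: if the separation Δᵢ of the
pattern xᵢ satisfies the condition of Theorem 3, then for any query ξ within distance
1/(αNM) of xᵢ, the attention output is within 2M(N−1)exp(2/N − αΔᵢ) of xᵢ. -/
theorem stmt_11 {d N : ℕ} (hN : 2 ≤ N) (x : Fin N → EuclideanSpace ℝ (Fin d))
    (M : ℝ) (hMub : ∀ j, ‖x j‖ ≤ M) (hMmem : ∃ j, ‖x j‖ = M) (hMpos : 0 < M)
    (i : Fin N) (t Δi : ℝ)
    (ht : IsGreatest {r : ℝ | ∃ j, j ≠ i ∧ r = ⟪x i, x j⟫} t)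
    (hΔi : Δi = ⟪x i, x i⟫ - t)
    (α : ℝ) (hα : 0 < α)
    (hsep : Δi ≥ 2 / (α * N) + (1 / α) * Real.log (2 * ((N : ℝ) - 1) * N * α * M ^ 2)) :
    ∀ ξ : EuclideanSpace ℝ (Fin d), ‖ξ - x i‖ ≤ 1 / (α * N * M) →
      ‖x i - ∑ j, (Real.exp (α * ⟪x j, ξ⟫) / ∑ k, Real.exp (α * ⟪x k, ξ⟫)) • x j‖
        ≤ 2 * M * ((N : ℝ) - 1) * Real.exp (2 / N - α * Δi) := by
  intro ξ hξ
  have hNR : (2:ℝ) ≤ N := by exact_mod_cast hN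
  have hNpos : (0:ℝ) < N := by linarith
  set S : ℝ := ∑ k, Real.exp (α * ⟪x k, ξ⟫) with hSdef
  have hSpos : 0 < S := Finset.sum_pos (fun k _ => Real.exp_pos _) ⟨i, Finset.mem_univ i⟩
  set p : Fin N → ℝ := fun j => Real.exp (α * ⟪x j, ξ⟫) / S with hpdef
  have hpnonneg : ∀ j, 0 ≤ p j := fun j => div_nonneg (Real.exp_pos _).le hSpos.le
  have hsum1 : ∑ j, p j = 1 := by
    simp only [hpdef]
    rw [← Finset.sum_div, ← hSdef, div_self hSpos.ne']
  have key : ∀ j, j ≠ i → p j ≤ Real.exp (2 / N - α * Δi) := by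
    intro j hj
    have h1 : ⟪x i, x j⟫ ≤ t := ht.2 ⟨j, hj, rfl⟩
    have hxji : ‖x j - x i‖ ≤ 2 * M := by
      calc ‖x j - x i‖ ≤ ‖x j‖ + ‖x i‖ := norm_sub_le _ _
        _ ≤ 2 * M := by linarith [hMub j, hMub i]
    have h2 : ⟪x j - x i, ξ - x i⟫ ≤ 2 / (α * N) := by
      calc ⟪x j - x i, ξ - x i⟫ ≤ ‖x j - x i‖ * ‖ξ - x i‖ := real_inner_le_norm _ _
        _ ≤ (2 * M) * (1 / (α * N * M)) :=
            mul_le_mul hxji hξ (norm_nonneg _) (by positivity)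
        _ = 2 / (α * N) := by field_simp
    have h3 : ⟪x j, ξ⟫ - ⟪x i, ξ⟫ = (⟪x i, x j⟫ - ⟪x i, x i⟫) + ⟪x j - x i, ξ - x i⟫ := by
      simp only [inner_sub_left, inner_sub_right]
      rw [real_inner_comm (x j) (x i)]
      ring
    have h4 : α * ⟪x j, ξ⟫ - α * ⟪x i, ξ⟫ ≤ 2 / N - α * Δi := by
      have hd : ⟪x j, ξ⟫ - ⟪x i, ξ⟫ ≤ -Δi + 2 / (α * N) := by
        rw [h3, hΔi]; linarith
      have h5 : α * (⟪x j, ξ⟫ - ⟪x i, ξ⟫) ≤ α * (-Δi + 2 / (α * N)) :=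
        mul_le_mul_of_nonneg_left hd hα.le
      have h6 : α * (2 / (α * N)) = 2 / N := by
        field_simp
      nlinarith
    have hiS : Real.exp (α * ⟪x i, ξ⟫) ≤ S :=
      Finset.single_le_sum (f := fun k => Real.exp (α * ⟪x k, ξ⟫))
        (fun k _ => (Real.exp_pos _).le) (Finset.mem_univ i)
    calc p j ≤ Real.exp (α * ⟪x j, ξ⟫) / Real.exp (α * ⟪x i, ξ⟫) := by
          apply div_le_div_of_nonneg_left (Real.exp_pos _).le (Real.exp_pos _) hiS
      _ = Real.exp (α * ⟪x j, ξ⟫ - α * ⟪x i, ξ⟫) := (Real.exp_sub _ _).symm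
      _ ≤ Real.exp (2 / N - α * Δi) := Real.exp_le_exp.mpr h4
  have hrw : x i - ∑ j, p j • x j = ∑ j, p j • (x i - x j) := by
    simp only [smul_sub]
    rw [Finset.sum_sub_distrib, ← Finset.sum_smul, hsum1, one_smul]
  show ‖x i - ∑ j, p j • x j‖ ≤ 2 * M * ((N : ℝ) - 1) * Real.exp (2 / N - α * Δi)
  rw [hrw]
  have hnormbound : ∀ j ∈ Finset.univ.erase i,
      p j * ‖x i - x j‖ ≤ 2 * M * Real.exp (2 / N - α * Δi) := by
    intro j hj
    have hj' : j ≠ i := Finset.ne_of_mem_erase hj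
    have hnorm : ‖x i - x j‖ ≤ 2 * M := by
      calc ‖x i - x j‖ ≤ ‖x i‖ + ‖x j‖ := norm_sub_le _ _
        _ ≤ 2 * M := by linarith [hMub i, hMub j]
    calc p j * ‖x i - x j‖ ≤ Real.exp (2 / N - α * Δi) * (2 * M) :=
          mul_le_mul (key j hj') hnorm (norm_nonneg _) (Real.exp_pos _).le
      _ = 2 * M * Real.exp (2 / N - α * Δi) := by ring
  calc ‖∑ j, p j • (x i - x j)‖ ≤ ∑ j, ‖p j • (x i - x j)‖ := norm_sum_le _ _
    _ = ∑ j, p j * ‖x i - x j‖ := by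
        refine Finset.sum_congr rfl fun j _ => ?_
        rw [norm_smul, Real.norm_eq_abs, abs_of_nonneg (hpnonneg j)]
    _ = p i * ‖x i - x i‖ + ∑ j ∈ Finset.univ.erase i, p j * ‖x i - x j‖ :=
        (Finset.add_sum_erase _ _ (Finset.mem_univ i)).symm
    _ = ∑ j ∈ Finset.univ.erase i, p j * ‖x i - x j‖ := by simp
    _ ≤ ∑ j ∈ Finset.univ.erase i, 2 * M * Real.exp (2 / N - α * Δi) :=
        Finset.sum_le_sum hnormbound
    _ = ((N : ℝ) - 1) * (2 * M * Real.exp (2 / N - α * Δi)) := by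
        rw [Finset.sum_const, Finset.card_erase_of_mem (Finset.mem_univ i),
          nsmul_eq_mul, Finset.card_univ, Fintype.card_fin]
        push_cast [Nat.cast_sub (by omega : 1 ≤ N)]
        ring
    _ = 2 * M * ((N : ℝ) - 1) * Real.exp (2 / N - α * Δi) := by ring
end

section
/- (Jacobian bound for the attention fixed-point iteration.) Let x_1, …, x_N ∈ ℝ^d with N ≥ 1, let β > 0, and define f : ℝ^d → ℝ^d by f(ξ) = Σ_{j=1}^N softmax(β·(⟨x_1, ξ⟩, …, ⟨x_N, ξ⟩))_j · x_j. Let m := (1/N)·Σ_{j=1}^N x_j be the arithmetic mean of the patterns and m_max := max_j ‖x_j − m‖. Then f is differentiable everywhere and the operator norm of its derivative satisfies ‖Df(ξ)‖ ≤ β·m_max² for every ξ ∈ ℝ^d. -/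
set_option maxHeartbeats 1000000
set_option synthInstance.maxHeartbeats 1000000


open scoped RealInnerProductSpace

/-- Jacobian bound for the attention fixed-point iteration: the self-attention map
f(ξ) = Σⱼ softmax(β⟨x, ξ⟩)ⱼ • xⱼ is differentiable, and the operator norm of its
derivative is bounded by β·m_max², where m_max is the maximal distance of a pattern
from the arithmetic mean of the patterns. -/
theorem stmt_12 {d N : ℕ} (hN : 1 ≤ N) (x : Fin N → EuclideanSpace ℝ (Fin d))
    (β : ℝ) (hβ : 0 < β)
    (f : EuclideanSpace ℝ (Fin d) → EuclideanSpace ℝ (Fin d))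
    (hf : ∀ ξ, f ξ =
      ∑ j, (Real.exp (β * ⟪x j, ξ⟫) / ∑ k, Real.exp (β * ⟪x k, ξ⟫)) • x j)
    (m : EuclideanSpace ℝ (Fin d)) (hm : m = ((N : ℝ)⁻¹) • ∑ j, x j)
    (mmax : ℝ) (hub : ∀ j, ‖x j - m‖ ≤ mmax) (hmem : ∃ j, ‖x j - m‖ = mmax) :
    Differentiable ℝ f ∧ ∀ ξ, ‖fderiv ℝ f ξ‖ ≤ β * mmax ^ 2 := by
  haveI : Nonempty (Fin N) := ⟨⟨0, hN⟩⟩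
  obtain ⟨j0, hj0⟩ := hmem
  have hmmax0 : 0 ≤ mmax := hj0 ▸ norm_nonneg _
  have hfeq : f = fun ξ => ∑ j,
      (Real.exp (β * ⟪x j, ξ⟫) / ∑ k, Real.exp (β * ⟪x k, ξ⟫)) • x j := funext hf
  subst hfeq
  have key : ∀ ξ : EuclideanSpace ℝ (Fin d),
      ∃ D : EuclideanSpace ℝ (Fin d) →L[ℝ] EuclideanSpace ℝ (Fin d),
        HasFDerivAt (fun ξ => ∑ j,
          (Real.exp (β * ⟪x j, ξ⟫) / ∑ k, Real.exp (β * ⟪x k, ξ⟫)) • x j) D ξ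
        ∧ ‖D‖ ≤ β * mmax ^ 2 := by
    intro ξ
    set e : Fin N → ℝ := fun j => Real.exp (β * ⟪x j, ξ⟫) with he
    set Z : ℝ := ∑ k, e k with hZdef
    have hZpos : 0 < Z := Finset.sum_pos (fun k _ => Real.exp_pos _) Finset.univ_nonempty
    have hZne : Z ≠ 0 := ne_of_gt hZpos
    set p : Fin N → ℝ := fun j => e j / Z with hp
    have hpnn : ∀ j, 0 ≤ p j := fun j => div_nonneg (Real.exp_pos _).le hZpos.le
    have hpsum : ∑ j, p j = 1 := by
      simp only [hp]
      rw [← Finset.sum_div, ← hZdef, div_self hZne]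
    set μ : EuclideanSpace ℝ (Fin d) := ∑ k, p k • x k with hμ
    have hμinner : ∀ u : EuclideanSpace ℝ (Fin d), ⟪μ, u⟫ = ∑ k, p k * ⟪x k, u⟫ := by
      intro u
      rw [hμ, sum_inner]
      exact Finset.sum_congr rfl fun k _ => real_inner_smul_left _ _ _
    -- derivatives of the exponentials
    have hE : ∀ j, HasFDerivAt (fun ξ' => Real.exp (β * ⟪x j, ξ'⟫))
        ((β * e j) • (innerSL ℝ (x j))) ξ := by
      intro j
      have h0 : HasFDerivAt (fun ξ' : EuclideanSpace ℝ (Fin d) => ⟪x j, ξ'⟫)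
          (innerSL ℝ (x j)) ξ := (innerSL ℝ (x j)).hasFDerivAt
      have h2 := (h0.const_mul β).exp
      have : Real.exp (β * ⟪x j, ξ⟫) • (β • innerSL ℝ (x j))
          = (β * e j) • innerSL ℝ (x j) := by
        rw [smul_smul, mul_comm]
      rwa [this] at h2
    have hZd : HasFDerivAt (fun ξ' => ∑ k, Real.exp (β * ⟪x k, ξ'⟫))
        (∑ k, (β * e k) • innerSL ℝ (x k)) ξ := HasFDerivAt.fun_sum (fun k _ => hE k)
    have hInv : HasFDerivAt (fun ξ' => (∑ k, Real.exp (β * ⟪x k, ξ'⟫))⁻¹)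
        ((-(Z ^ 2)⁻¹) • (∑ k, (β * e k) • innerSL ℝ (x k))) ξ :=
      (hasDerivAt_inv hZne).comp_hasFDerivAt ξ hZd
    -- derivative of softmax weights
    have hPj : ∀ j, HasFDerivAt
        (fun ξ' => Real.exp (β * ⟪x j, ξ'⟫) / ∑ k, Real.exp (β * ⟪x k, ξ'⟫))
        ((β * p j) • innerSL ℝ (x j - μ)) ξ := by
      intro j
      have hmul := (hE j).mul hInv
      have hZrfl : (∑ k, Real.exp (β * ⟪x k, ξ⟫)) = Z := rfl
      have herfl : Real.exp (β * ⟪x j, ξ⟫) = e j := rfl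
      rw [hZrfl, herfl] at hmul
      have hfun : (fun ξ' => Real.exp (β * ⟪x j, ξ'⟫) / ∑ k, Real.exp (β * ⟪x k, ξ'⟫))
          = fun ξ' => Real.exp (β * ⟪x j, ξ'⟫) * (∑ k, Real.exp (β * ⟪x k, ξ'⟫))⁻¹ := by
        funext ξ'; rw [div_eq_mul_inv]
      rw [hfun]
      refine hmul.congr_fderiv ?_
      refine ContinuousLinearMap.ext fun u => ?_
      simp only [ContinuousLinearMap.add_apply, ContinuousLinearMap.coe_smul',
        Pi.smul_apply, ContinuousLinearMap.coe_sum', Finset.sum_apply,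
        innerSL_apply_apply, smul_eq_mul]
      have hsum2 : ∑ k, (β * e k) * ⟪x k, u⟫ = β * ∑ k, e k * ⟪x k, u⟫ := by
        rw [Finset.mul_sum]
        exact Finset.sum_congr rfl fun k _ => by ring
      have hsum3 : ∑ k, p k * ⟪x k, u⟫ = (∑ k, e k * ⟪x k, u⟫) / Z := by
        rw [Finset.sum_div]
        exact Finset.sum_congr rfl fun k _ => by rw [hp]; ring
      rw [inner_sub_left, hμinner u, hsum2, hsum3]
      simp only [hp]
      field_simp
      ring
    -- derivative of f at ξ (raw form)
    have hfd : HasFDerivAt (fun ξ' => ∑ j,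
        (Real.exp (β * ⟪x j, ξ'⟫) / ∑ k, Real.exp (β * ⟪x k, ξ'⟫)) • x j)
        (∑ j, ((β * p j) • innerSL ℝ (x j - μ)).smulRight (x j)) ξ :=
      HasFDerivAt.fun_sum (fun j _ => (hPj j).smul_const (x j))
    -- rewrite to the covariance form
    set D : EuclideanSpace ℝ (Fin d) →L[ℝ] EuclideanSpace ℝ (Fin d) :=
      ∑ j, (β * p j) • ((innerSL ℝ (x j - μ)).smulRight (x j - μ)) with hD
    have hzero : ∀ u : EuclideanSpace ℝ (Fin d), ∑ j, p j * ⟪x j - μ, u⟫ = 0 := by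
      intro u
      simp_rw [inner_sub_left, mul_sub]
      rw [Finset.sum_sub_distrib, ← Finset.sum_mul, hpsum, one_mul, hμinner u, sub_self]
    have hDeq : (∑ j, ((β * p j) • innerSL ℝ (x j - μ)).smulRight (x j)) = D := by
      refine ContinuousLinearMap.ext fun u => ?_
      rw [hD]
      simp only [ContinuousLinearMap.coe_sum', Finset.sum_apply,
        ContinuousLinearMap.smulRight_apply, ContinuousLinearMap.coe_smul',
        Pi.smul_apply, innerSL_apply_apply, smul_eq_mul]
      rw [← sub_eq_zero, ← Finset.sum_sub_distrib]
      have : ∀ j, ((β * p j) * ⟪x j - μ, u⟫) • x j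
          - (β * p j) • (⟪x j - μ, u⟫ • (x j - μ))
          = ((β * p j) * ⟪x j - μ, u⟫) • μ := by
        intro j
        rw [smul_smul, ← smul_sub, sub_sub_cancel]
      simp_rw [this]
      rw [← Finset.sum_smul]
      have hc : ∑ j, (β * p j) * ⟪x j - μ, u⟫ = 0 := by
        have : ∑ j, (β * p j) * ⟪x j - μ, u⟫ = β * ∑ j, p j * ⟪x j - μ, u⟫ := by
          rw [Finset.mul_sum]
          exact Finset.sum_congr rfl fun j _ => by ring
        rw [this, hzero u, mul_zero]
      rw [hc, zero_smul]
    rw [hDeq] at hfd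
    refine ⟨D, hfd, ?_⟩
    -- norm bound
    have hstep1 : ‖D‖ ≤ ∑ j, (β * p j) * ‖x j - μ‖ ^ 2 := by
      refine (norm_sum_le _ _).trans (Finset.sum_le_sum fun j _ => ?_)
      refine (ContinuousLinearMap.opNorm_smul_le _ _).trans_eq ?_
      rw [ContinuousLinearMap.norm_smulRight_apply, innerSL_apply_norm, Real.norm_eq_abs,
        abs_of_nonneg (by positivity), sq]
    refine hstep1.trans ?_
    have hrw : ∑ j, (β * p j) * ‖x j - μ‖ ^ 2 = β * ∑ j, p j * ‖x j - μ‖ ^ 2 := by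
      rw [Finset.mul_sum]
      exact Finset.sum_congr rfl fun j _ => by ring
    rw [hrw]
    refine mul_le_mul_of_nonneg_left ?_ hβ.le
    -- bias-variance: Σ p_j ‖x_j - μ‖² ≤ Σ p_j ‖x_j - m‖² ≤ mmax²
    have hcross : ∑ j, p j * ⟪x j - μ, μ - m⟫ = 0 := by
      have h1 : ∑ j, p j * ⟪x j - μ, μ - m⟫ = ⟪∑ j, p j • (x j - μ), μ - m⟫ := by
        rw [sum_inner]
        exact Finset.sum_congr rfl fun j _ => (real_inner_smul_left _ _ _).symm
      have h2 : ∑ j, p j • (x j - μ) = 0 := by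
        simp_rw [smul_sub]
        rw [Finset.sum_sub_distrib, ← Finset.sum_smul, hpsum, one_smul, ← hμ, sub_self]
      rw [h1, h2, inner_zero_left]
    have hid : ∀ j, ‖x j - m‖ ^ 2
        = ‖x j - μ‖ ^ 2 + 2 * ⟪x j - μ, μ - m⟫ + ‖μ - m‖ ^ 2 := by
      intro j
      have h := norm_add_sq_real (x j - μ) (μ - m)
      rwa [sub_add_sub_cancel] at h
    have hexp : ∑ j, p j * ‖x j - m‖ ^ 2
        = ∑ j, p j * ‖x j - μ‖ ^ 2 + 2 * (∑ j, p j * ⟪x j - μ, μ - m⟫)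
          + (∑ j, p j) * ‖μ - m‖ ^ 2 := by
      simp_rw [hid, mul_add]
      rw [Finset.sum_add_distrib, Finset.sum_add_distrib, ← Finset.sum_mul, Finset.mul_sum]
      congr 1
      congr 1
      exact Finset.sum_congr rfl fun j _ => by ring
    have hbv : ∑ j, p j * ‖x j - μ‖ ^ 2 ≤ ∑ j, p j * ‖x j - m‖ ^ 2 := by
      rw [hexp, hcross, hpsum]
      nlinarith [sq_nonneg ‖μ - m‖]
    refine hbv.trans ?_
    calc ∑ j, p j * ‖x j - m‖ ^ 2 ≤ ∑ j, p j * mmax ^ 2 := by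
          refine Finset.sum_le_sum fun j _ => ?_
          exact mul_le_mul_of_nonneg_left
            (pow_le_pow_left₀ (norm_nonneg _) (hub j) 2) (hpnn j)
      _ = mmax ^ 2 := by rw [← Finset.sum_mul, hpsum, one_mul]
  refine ⟨fun ξ => ((key ξ).choose_spec.1).differentiableAt, fun ξ => ?_⟩
  obtain ⟨D, h1, h2⟩ := key ξ
  rw [h1.fderiv]
  exact h2
end

section
/- Let x_1, …, x_N ∈ ℝ^d with N ≥ 1, let β > 0, and define f : ℝ^d → ℝ^d by f(ξ) = Σ_{j=1}^N softmax(β·(⟨x_1, ξ⟩, …, ⟨x_N, ξ⟩))_j · x_j. Let m := (1/N)·Σ_{j=1}^N x_j and m_max := max_j ‖x_j − m‖. Then f(0) = m (the softmax of the zero vector is uniform, so the attention output at the zero query is the arithmetic mean of the patterns), and for every ξ ∈ ℝ^d, ‖f(ξ) − m‖ ≤ β·m_max²·‖ξ‖. -/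
lemma cov_bound_centered {N : ℕ} (p a c : Fin N → ℝ) (hp : ∀ j, 0 ≤ p j)
    (hs : ∑ j, p j = 1) {A C : ℝ} (hA : 0 ≤ A) (hC : 0 ≤ C)
    (ha : ∀ j, |a j| ≤ A) (hc : ∀ j, |c j| ≤ C) :
    |(∑ j, p j * (a j * c j)) - (∑ j, p j * a j) * (∑ j, p j * c j)| ≤ A * C := by
  obtain ⟨abar, habar⟩ : ∃ y, y = ∑ j, p j * a j := ⟨_, rfl⟩
  have h1 : (∑ j, p j * (a j * c j)) - abar * (∑ j, p j * c j)
      = ∑ j, (Real.sqrt (p j) * (a j - abar)) * (Real.sqrt (p j) * c j) := by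
    rw [Finset.mul_sum, ← Finset.sum_sub_distrib]
    refine Finset.sum_congr rfl fun j _ => ?_
    have hps : Real.sqrt (p j) * Real.sqrt (p j) = p j := Real.mul_self_sqrt (hp j)
    calc p j * (a j * c j) - abar * (p j * c j) = p j * ((a j - abar) * c j) := by ring
      _ = Real.sqrt (p j) * (a j - abar) * (Real.sqrt (p j) * c j) := by
        linear_combination ((a j - abar) * c j) * hps.symm
  have hCS := Finset.sum_mul_sq_le_sq_mul_sq Finset.univ
    (fun j => Real.sqrt (p j) * (a j - abar)) (fun j => Real.sqrt (p j) * c j)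
  have hu : ∀ j, (Real.sqrt (p j) * (a j - abar)) ^ 2 = p j * (a j - abar) ^ 2 := by
    intro j; rw [mul_pow, Real.sq_sqrt (hp j)]
  have hv : ∀ j, (Real.sqrt (p j) * c j) ^ 2 = p j * c j ^ 2 := by
    intro j; rw [mul_pow, Real.sq_sqrt (hp j)]
  simp only [hu, hv] at hCS
  have h2 : ∑ j, p j * a j ^ 2 ≤ A ^ 2 := by
    calc ∑ j, p j * a j ^ 2 ≤ ∑ j, p j * A ^ 2 := by
          refine Finset.sum_le_sum fun j _ => mul_le_mul_of_nonneg_left ?_ (hp j)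
          have := abs_le.mp (ha j); nlinarith
      _ = A ^ 2 := by rw [← Finset.sum_mul, hs, one_mul]
  have expand : ∑ j, p j * (a j - abar) ^ 2
      = (∑ j, p j * a j ^ 2) - 2 * abar * (∑ j, p j * a j) + abar ^ 2 * (∑ j, p j) := by
    rw [Finset.mul_sum, Finset.mul_sum, ← Finset.sum_sub_distrib, ← Finset.sum_add_distrib]
    exact Finset.sum_congr rfl fun j _ => by ring
  have hvar : ∑ j, p j * (a j - abar) ^ 2 ≤ A ^ 2 := by
    rw [expand, hs, ← habar]; nlinarith [sq_nonneg abar]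
  have hvc : ∑ j, p j * c j ^ 2 ≤ C ^ 2 := by
    calc ∑ j, p j * c j ^ 2 ≤ ∑ j, p j * C ^ 2 := by
          refine Finset.sum_le_sum fun j _ => mul_le_mul_of_nonneg_left ?_ (hp j)
          have := abs_le.mp (hc j); nlinarith
      _ = C ^ 2 := by rw [← Finset.sum_mul, hs, one_mul]
  have hsq : ((∑ j, p j * (a j * c j)) - abar * (∑ j, p j * c j)) ^ 2 ≤ (A * C) ^ 2 := by
    rw [h1]
    calc _ ≤ (∑ j, p j * (a j - abar) ^ 2) * ∑ j, p j * c j ^ 2 := hCS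
      _ ≤ A ^ 2 * C ^ 2 := by
          refine mul_le_mul hvar hvc
            (Finset.sum_nonneg fun j _ => mul_nonneg (hp j) (sq_nonneg _)) (by positivity)
      _ = (A * C) ^ 2 := by ring
  rw [← habar]
  calc |(∑ j, p j * (a j * c j)) - abar * (∑ j, p j * c j)|
      = Real.sqrt (((∑ j, p j * (a j * c j)) - abar * (∑ j, p j * c j)) ^ 2) := by
        rw [Real.sqrt_sq_eq_abs]
    _ ≤ Real.sqrt ((A * C) ^ 2) := Real.sqrt_le_sqrt hsq
    _ = A * C := Real.sqrt_sq (by positivity)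

lemma cov_bound {N : ℕ} (p a c : Fin N → ℝ) (hp : ∀ j, 0 ≤ p j)
    (hs : ∑ j, p j = 1) {α γ A C : ℝ} (hA : 0 ≤ A) (hC : 0 ≤ C)
    (ha : ∀ j, |a j - α| ≤ A) (hc : ∀ j, |c j - γ| ≤ C) :
    |(∑ j, p j * (a j * c j)) - (∑ j, p j * a j) * (∑ j, p j * c j)| ≤ A * C := by
  have key := cov_bound_centered p (fun j => a j - α) (fun j => c j - γ) hp hs hA hC ha hc
  have e1 : ∑ j, p j * ((a j - α) * (c j - γ))
      = (∑ j, p j * (a j * c j)) - α * (∑ j, p j * c j) - γ * (∑ j, p j * a j)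
        + α * γ * (∑ j, p j) := by
    rw [Finset.mul_sum, Finset.mul_sum, Finset.mul_sum, ← Finset.sum_sub_distrib,
      ← Finset.sum_sub_distrib, ← Finset.sum_add_distrib]
    exact Finset.sum_congr rfl fun j _ => by ring
  have e2 : ∑ j, p j * (a j - α) = (∑ j, p j * a j) - α * (∑ j, p j) := by
    rw [Finset.mul_sum, ← Finset.sum_sub_distrib]
    exact Finset.sum_congr rfl fun j _ => by ring
  have e3 : ∑ j, p j * (c j - γ) = (∑ j, p j * c j) - γ * (∑ j, p j) := by
    rw [Finset.mul_sum, ← Finset.sum_sub_distrib]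
    exact Finset.sum_congr rfl fun j _ => by ring
  simp only [e1, e2, e3, hs] at key
  convert key using 2
  ring

open scoped RealInnerProductSpace

lemma alg_aux (A1 A2 A3 Zt b : ℝ) (hZ : Zt ≠ 0) :
    (b * A1 * Zt - A3 * (b * A2)) / Zt ^ 2 = b * (A1 / Zt - A2 / Zt * (A3 / Zt)) := by
  field_simp


lemma key_inner {d N : ℕ} (hN : 1 ≤ N) (x : Fin N → EuclideanSpace ℝ (Fin d))
    (β : ℝ) (hβ : 0 < β)
    (m : EuclideanSpace ℝ (Fin d)) (hm : m = ((N : ℝ)⁻¹) • ∑ j, x j)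
    (mmax : ℝ) (hmmax : 0 ≤ mmax) (hub : ∀ j, ‖x j - m‖ ≤ mmax)
    (ξ u : EuclideanSpace ℝ (Fin d)) :
    |⟪(∑ j, (Real.exp (β * ⟪x j, ξ⟫) / ∑ k, Real.exp (β * ⟪x k, ξ⟫)) • x j) - m, u⟫|
      ≤ β * ((mmax * ‖ξ‖) * (mmax * ‖u‖)) := by
  haveI : NeZero N := ⟨by omega⟩
  haveI : Nonempty (Fin N) := ⟨⟨0, by omega⟩⟩
  set a : Fin N → ℝ := fun j => ⟪x j, ξ⟫ with ha_def
  set c : Fin N → ℝ := fun j => ⟪x j, u⟫ with hc_def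
  set E : ℝ → Fin N → ℝ := fun t j => Real.exp (t * (β * a j)) with hE_def
  set Z : ℝ → ℝ := fun t => ∑ j, E t j with hZ_def
  set S : ℝ → ℝ := fun t => ∑ j, E t j * c j with hS_def
  have hZpos : ∀ t, 0 < Z t :=
    fun t => Finset.sum_pos (fun j _ => Real.exp_pos _) Finset.univ_nonempty
  set D : ℝ → ℝ := fun t =>
    ((∑ j, E t j * (β * a j) * c j) * Z t - S t * (∑ j, E t j * (β * a j))) / Z t ^ 2
    with hD_def
  have hg : ∀ t, HasDerivAt (fun t => S t / Z t) (D t) t := by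
    intro t
    have hS' : HasDerivAt S (∑ j, E t j * (β * a j) * c j) t := by
      apply HasDerivAt.fun_sum
      intro j _
      exact ((hasDerivAt_mul_const (β * a j)).exp).mul_const (c j)
    have hZ' : HasDerivAt Z (∑ j, E t j * (β * a j)) t := by
      apply HasDerivAt.fun_sum
      intro j _
      exact (hasDerivAt_mul_const (β * a j)).exp
    exact hS'.div hZ' (hZpos t).ne'
  -- bound the derivative
  have hDbound : ∀ t, |D t| ≤ β * ((mmax * ‖ξ‖) * (mmax * ‖u‖)) := by
    intro t
    set p : Fin N → ℝ := fun j => E t j / Z t with hp_def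
    have hp : ∀ j, 0 ≤ p j := fun j => div_nonneg (Real.exp_nonneg _) (hZpos t).le
    have hps : ∑ j, p j = 1 := by
      rw [← Finset.sum_div]; exact div_self (hZpos t).ne'
    have h1 : ∑ j, p j * (a j * c j) = (∑ j, E t j * (a j * c j)) / Z t := by
      rw [Finset.sum_div]; exact Finset.sum_congr rfl fun j _ => div_mul_eq_mul_div _ _ _
    have h2 : ∑ j, p j * a j = (∑ j, E t j * a j) / Z t := by
      rw [Finset.sum_div]; exact Finset.sum_congr rfl fun j _ => div_mul_eq_mul_div _ _ _
    have h3 : ∑ j, p j * c j = (∑ j, E t j * c j) / Z t := by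
      rw [Finset.sum_div]; exact Finset.sum_congr rfl fun j _ => div_mul_eq_mul_div _ _ _
    have hnum1 : ∑ j, E t j * (β * a j) * c j = β * ∑ j, E t j * (a j * c j) := by
      rw [Finset.mul_sum]; exact Finset.sum_congr rfl fun j _ => by ring
    have hnum2 : ∑ j, E t j * (β * a j) = β * ∑ j, E t j * a j := by
      rw [Finset.mul_sum]; exact Finset.sum_congr rfl fun j _ => by ring
    have hD : D t = β * ((∑ j, p j * (a j * c j))
        - (∑ j, p j * a j) * (∑ j, p j * c j)) := by
      rw [h1, h2, h3]
      simp only [hD_def, hS_def]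
      rw [hnum1, hnum2]
      exact alg_aux _ _ _ _ _ (hZpos t).ne'
    rw [hD, abs_mul, abs_of_pos hβ]
    refine mul_le_mul_of_nonneg_left ?_ hβ.le
    refine cov_bound p a c hp hps (α := ⟪m, ξ⟫) (γ := ⟪m, u⟫)
      (by positivity) (by positivity) (fun j => ?_) (fun j => ?_)
    · have : a j - ⟪m, ξ⟫ = ⟪x j - m, ξ⟫ := by rw [inner_sub_left]
      rw [this]
      calc |⟪x j - m, ξ⟫| ≤ ‖x j - m‖ * ‖ξ‖ := abs_real_inner_le_norm _ _
        _ ≤ mmax * ‖ξ‖ := mul_le_mul_of_nonneg_right (hub j) (norm_nonneg _)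
    · have : c j - ⟪m, u⟫ = ⟪x j - m, u⟫ := by rw [inner_sub_left]
      rw [this]
      calc |⟪x j - m, u⟫| ≤ ‖x j - m‖ * ‖u‖ := abs_real_inner_le_norm _ _
        _ ≤ mmax * ‖u‖ := mul_le_mul_of_nonneg_right (hub j) (norm_nonneg _)
  -- MVT
  have hMVT : ‖S 1 / Z 1 - S 0 / Z 0‖ ≤ (β * ((mmax * ‖ξ‖) * (mmax * ‖u‖))) * ‖(1:ℝ) - 0‖ := by
    refine Convex.norm_image_sub_le_of_norm_hasDerivWithin_le
      (f := fun t => S t / Z t) (f' := D) (s := Set.univ)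
      (fun t _ => (hg t).hasDerivWithinAt) (fun t _ => ?_) convex_univ trivial trivial
    rw [Real.norm_eq_abs]; exact hDbound t
  -- endpoints
  have hg1 : ⟪(∑ j, (Real.exp (β * ⟪x j, ξ⟫) / ∑ k, Real.exp (β * ⟪x k, ξ⟫)) • x j), u⟫
      = S 1 / Z 1 := by
    rw [sum_inner]
    simp only [real_inner_smul_left, hS_def, hZ_def, hE_def, one_mul]
    rw [Finset.sum_div]
    exact Finset.sum_congr rfl fun j _ => div_mul_eq_mul_div _ _ _
  have hg0 : ⟪m, u⟫ = S 0 / Z 0 := by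
    simp only [hS_def, hZ_def, hE_def, zero_mul, Real.exp_zero, one_mul,
      Finset.sum_const, Finset.card_univ, Fintype.card_fin, nsmul_eq_mul, mul_one]
    rw [hm, real_inner_smul_left, sum_inner, div_eq_inv_mul]
  rw [inner_sub_left, hg1, hg0]
  simpa [Real.norm_eq_abs] using hMVT

/-- At the zero query, the self-attention output equals the arithmetic mean m of the
stored patterns, and for any query ξ the output deviates from m by at most β·m_max²·‖ξ‖. -/
theorem stmt_13 {d N : ℕ} (hN : 1 ≤ N) (x : Fin N → EuclideanSpace ℝ (Fin d))
    (β : ℝ) (hβ : 0 < β)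
    (f : EuclideanSpace ℝ (Fin d) → EuclideanSpace ℝ (Fin d))
    (hf : ∀ ξ, f ξ =
      ∑ j, (Real.exp (β * ⟪x j, ξ⟫) / ∑ k, Real.exp (β * ⟪x k, ξ⟫)) • x j)
    (m : EuclideanSpace ℝ (Fin d)) (hm : m = ((N : ℝ)⁻¹) • ∑ j, x j)
    (mmax : ℝ) (hub : ∀ j, ‖x j - m‖ ≤ mmax) (hmem : ∃ j, ‖x j - m‖ = mmax) :
    f 0 = m ∧ ∀ ξ, ‖f ξ - m‖ ≤ β * mmax ^ 2 * ‖ξ‖ := by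
  constructor
  · rw [hf 0, hm]
    have hz : ∀ k : Fin N, Real.exp (β * ⟪x k, (0 : EuclideanSpace ℝ (Fin d))⟫) = 1 := by
      intro k; simp
    simp [hz, Finset.smul_sum, one_div]
  · intro ξ
    have hmmax : 0 ≤ mmax := by
      obtain ⟨j, hj⟩ := hmem; rw [← hj]; exact norm_nonneg _
    have key := key_inner hN x β hβ m hm mmax hmmax hub ξ (f ξ - m)
    rw [← hf ξ] at key
    have hsq : ⟪f ξ - m, f ξ - m⟫ = ‖f ξ - m‖ ^ 2 := real_inner_self_eq_norm_sq _
    rcases eq_or_ne (‖f ξ - m‖) 0 with h0 | h0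
    · rw [h0]; positivity
    · have hpos : 0 < ‖f ξ - m‖ := (norm_nonneg _).lt_of_ne' h0
      have hle : ‖f ξ - m‖ ^ 2 ≤ β * ((mmax * ‖ξ‖) * (mmax * ‖f ξ - m‖)) := by
        rw [← hsq]; exact (le_abs_self _).trans key
      nlinarith
end
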